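/- Under the hypotheses 2^7 ≤ V, V' ≤ 2^10, L, L' > 0, 1/4 ≤ V'/V ≤ 4, 1/4 ≤ L'/L ≤ 4 with both ratios on the same side of 1, the multi-scale rate R_m = L·log₂(V) + L'·log₂(V') strictly exceeds the single-scale enlarged rate R_s = L·log₂(V + V'). -/
import Mathlib


/-- The multi-scale rate `R_m = L·log₂ V + L'·log₂ V'` strictly exceeds the
single-scale enlarged rate `R_s = L·log₂(V + V')`. -/
theorem stmt_2 (V V' L L' : ℝ)
    (hV : (2 : ℝ) ^ (7 : ℕ) ≤ V) (hV2 : V ≤ (2 : ℝ) ^ (10 : ℕ))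
    (hV' : (2 : ℝ) ^ (7 : ℕ) ≤ V') (hV'2 : V' ≤ (2 : ℝ) ^ (10 : ℕ))
    (hL : 0 < L) (hL' : 0 < L')
    (hr1 : 1 / 4 ≤ V' / V) (hr2 : V' / V ≤ 4)
    (hr3 : 1 / 4 ≤ L' / L) (hr4 : L' / L ≤ 4)
    (hdir : (1 ≤ V' / V ∧ 1 ≤ L' / L) ∨ (V' / V ≤ 1 ∧ L' / L ≤ 1)) :
    L * Real.logb 2 (V + V') < L * Real.logb 2 V + L' * Real.logb 2 V' := by
  have hVpos : (0 : ℝ) < V := lt_of_lt_of_le (by norm_num) hV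
  have hV'pos : (0 : ℝ) < V' := lt_of_lt_of_le (by norm_num) hV'
  have h1 : (1 : ℝ) < 2 := one_lt_two
  -- logb 2 V' ≥ 7
  have hlogV' : (7 : ℝ) ≤ Real.logb 2 V' := by
    have := Real.logb_le_logb_of_le h1 (by norm_num : (0:ℝ) < 2 ^ (7:ℕ)) hV'
    rwa [show ((2:ℝ) ^ (7:ℕ)) = (2:ℝ) ^ (7:ℝ) by
        rw [show (7:ℝ) = ((7:ℕ):ℝ) by norm_num, Real.rpow_natCast],
      Real.logb_rpow (by norm_num) (by norm_num)] at this
  rcases hdir with ⟨hv, hl⟩ | ⟨hv, hl⟩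
  · -- V' ≥ V, L' ≥ L ; V+V' ≤ 8V
    have hLL : L ≤ L' := by
      rw [le_div_iff₀ hL] at hl; linarith
    have hVV' : V' ≤ 4 * V := by
      rw [div_le_iff₀ hVpos] at hr2; linarith
    have hsum : V + V' ≤ 8 * V := by linarith
    have hlog : Real.logb 2 (V + V') ≤ 3 + Real.logb 2 V := by
      have h8 : Real.logb 2 (8 * V) = 3 + Real.logb 2 V := by
        rw [Real.logb_mul (by norm_num) (ne_of_gt hVpos)]
        rw [show (8:ℝ) = 2 ^ (3:ℝ) by
            rw [show (3:ℝ) = ((3:ℕ):ℝ) by norm_num, Real.rpow_natCast]; norm_num,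
          Real.logb_rpow (by norm_num) (by norm_num)]
      calc Real.logb 2 (V + V') ≤ Real.logb 2 (8 * V) :=
            Real.logb_le_logb_of_le h1 (by positivity) hsum
        _ = 3 + Real.logb 2 V := h8
    nlinarith [mul_le_mul_of_nonneg_left hlog (le_of_lt hL),
      mul_le_mul hLL hlogV' (by norm_num) (le_of_lt hL')]
  · -- V' ≤ V, L' ≥ L/4 ; V+V' ≤ 2V
    have hLL : L ≤ 4 * L' := by
      rw [le_div_iff₀ hL] at hr3; linarith
    have hVV' : V' ≤ V := by
      rw [div_le_iff₀ hVpos] at hv; linarith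
    have hsum : V + V' ≤ 2 * V := by linarith
    have hlog : Real.logb 2 (V + V') ≤ 1 + Real.logb 2 V := by
      have h2 : Real.logb 2 (2 * V) = 1 + Real.logb 2 V := by
        rw [Real.logb_mul (by norm_num) (ne_of_gt hVpos), Real.logb_self_eq_one] <;> norm_num
      calc Real.logb 2 (V + V') ≤ Real.logb 2 (2 * V) :=
            Real.logb_le_logb_of_le h1 (by positivity) hsum
        _ = 1 + Real.logb 2 V := h2
    nlinarith [mul_le_mul_of_nonneg_left hlog (le_of_lt hL),
      mul_le_mul_of_nonneg_left hlogV' (le_of_lt hL')]
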